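/- Without assuming stochastic monotonicity, with τ(u) = E[Y(1)−Y(0)|U=u] and w(u) = P(D=1|Z=1,U=u) − P(D=1|Z=0,U=u), the stochastic compliance class assumptions ((Y(1),Y(0),U) independent of Z; (Y(1),Y(0)) conditionally independent of D given (Z,U); Y = D·Y(1)+(1−D)·Y(0); E[w(U)] ≠ 0) imply (E[Y|Z=1] − E[Y|Z=0]) / (P(D=1|Z=1) − P(D=1|Z=0)) = E[τ(U)·w(U)] / E[w(U)]. -/
import Mathlib


open Finset
open scoped Classical

/-- Probability of an event `A` under mass function `p` on a finite sample space. -/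
noncomputable def prb {Ω : Type*} [Fintype Ω] (p : Ω → ℝ) (A : Ω → Prop) : ℝ :=
  ∑ ω, if A ω then p ω else 0

/-- Expectation of a real random variable `X` under mass function `p`. -/
noncomputable def exv {Ω : Type*} [Fintype Ω] (p : Ω → ℝ) (X : Ω → ℝ) : ℝ :=
  ∑ ω, p ω * X ω

/-- Conditional probability `P(A | B)`. -/
noncomputable def cpr {Ω : Type*} [Fintype Ω] (p : Ω → ℝ) (A B : Ω → Prop) : ℝ :=
  prb p (fun ω => A ω ∧ B ω) / prb p B

/-- Conditional expectation `E[X | B]`. -/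
noncomputable def cex {Ω : Type*} [Fintype Ω] (p : Ω → ℝ) (X : Ω → ℝ) (B : Ω → Prop) : ℝ :=
  (∑ ω, if B ω then p ω * X ω else 0) / prb p B

section helpers
variable {Ω ι : Type*} [Fintype Ω] [Fintype ι]

/-- Restricted expectation `E[X · 1_A]`. -/
noncomputable def ev (p : Ω → ℝ) (A : Ω → Prop) (X : Ω → ℝ) : ℝ :=
  ∑ ω, if A ω then p ω * X ω else 0

lemma prb_congr (p : Ω → ℝ) {A B : Ω → Prop} (h : ∀ ω, A ω ↔ B ω) :
    prb p A = prb p B :=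
  Finset.sum_congr rfl fun ω _ => by rw [if_congr (h ω) rfl rfl]

lemma ev_congr (p : Ω → ℝ) {A B : Ω → Prop} (X : Ω → ℝ) (h : ∀ ω, A ω ↔ B ω) :
    ev p A X = ev p B X :=
  Finset.sum_congr rfl fun ω _ => by rw [if_congr (h ω) rfl rfl]

lemma prb_eq_ev (p : Ω → ℝ) (A : Ω → Prop) : prb p A = ev p A (fun _ => 1) :=
  Finset.sum_congr rfl fun ω _ => by by_cases h : A ω <;> simp [h]

lemma prb_mono (p : Ω → ℝ) (hp : ∀ ω, 0 ≤ p ω) {A B : Ω → Prop}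
    (h : ∀ ω, A ω → B ω) : prb p A ≤ prb p B := by
  unfold prb
  apply Finset.sum_le_sum
  intro ω _
  by_cases hA : A ω
  · simp [hA, h ω hA]
  · by_cases hB : B ω <;> simp [hA, hB, hp ω]

lemma ev_partition (p : Ω → ℝ) (A : Ω → Prop) (X : Ω → ℝ) (U : Ω → ι) :
    ev p A X = ∑ u : ι, ev p (fun ω => A ω ∧ U ω = u) X := by
  unfold ev
  rw [Finset.sum_comm]
  refine Finset.sum_congr rfl fun ω _ => ?_
  by_cases hA : A ω
  · simp [hA]
  · simp [hA]

lemma ev_image (p : Ω → ℝ) (A : Ω → Prop) (g : Ω → ℝ × ℝ) (φ : ℝ × ℝ → ℝ) :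
    ev p A (fun ω => φ (g ω)) =
      ∑ c ∈ Finset.image g Finset.univ, φ c * prb p (fun ω => g ω = c ∧ A ω) := by
  have h : ∀ c, φ c * prb p (fun ω => g ω = c ∧ A ω)
      = ∑ ω, (if g ω = c ∧ A ω then p ω * φ (g ω) else 0) := by
    intro c
    unfold prb
    rw [Finset.mul_sum]
    refine Finset.sum_congr rfl fun ω _ => ?_
    by_cases h : g ω = c ∧ A ω
    · rw [if_pos h, if_pos h, h.1]; ring
    · rw [if_neg h, if_neg h, mul_zero]
  refine Eq.trans ?_ (Finset.sum_congr rfl fun c _ => (h c).symm)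
  unfold ev
  rw [Finset.sum_comm]
  refine Finset.sum_congr rfl fun ω _ => ?_
  by_cases hA : A ω
  · rw [if_pos hA]
    rw [Finset.sum_eq_single_of_mem (g ω) (Finset.mem_image_of_mem g (Finset.mem_univ ω))
      (fun c _ hne => if_neg (fun hc => hne (hc.1.symm)))]
    rw [if_pos ⟨rfl, hA⟩]
  · rw [if_neg hA]
    exact (Finset.sum_eq_zero fun c _ => if_neg (fun hc => hA hc.2)).symm

lemma exv_comp (p : Ω → ℝ) (U : Ω → ι) (f : ι → ℝ) :
    exv p (fun ω => f (U ω)) = ∑ u, f u * prb p (fun ω => U ω = u) := by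
  unfold exv prb
  have h : ∀ u, f u * ∑ ω, (if U ω = u then p ω else 0)
      = ∑ ω, (if U ω = u then p ω * f (U ω) else 0) := by
    intro u
    rw [Finset.mul_sum]
    refine Finset.sum_congr rfl fun ω _ => ?_
    by_cases h : U ω = u
    · rw [if_pos h, if_pos h, h]; ring
    · simp [h]
  simp_rw [h]
  rw [Finset.sum_comm]
  refine Finset.sum_congr rfl fun ω _ => ?_
  rw [Finset.sum_eq_single_of_mem (U ω) (Finset.mem_univ _)
    (fun u _ hne => if_neg (fun hc => hne hc.symm))]
  rw [if_pos rfl]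

end helpers

/-- without monotonicity, the Wald ratio equals E[τ(U)w(U)]/E[w(U)]. -/
theorem stmt15 {Ω ι : Type*} [Fintype Ω] [Fintype ι]
    (p : Ω → ℝ) (hp : ∀ ω, 0 ≤ p ω) (hpsum : ∑ ω, p ω = 1)
    (Z D Y Y1 Y0 : Ω → ℝ) (U : Ω → ι)
    (hZbin : ∀ ω, Z ω = 0 ∨ Z ω = 1) (hDbin : ∀ ω, D ω = 0 ∨ D ω = 1)
    (hYobs : ∀ ω, Y ω = D ω * Y1 ω + (1 - D ω) * Y0 ω)
    (hpos : ∀ (z : ℝ) (u : ι), (z = 0 ∨ z = 1) →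
      0 < prb p (fun ω => Z ω = z ∧ U ω = u))
    (hindep : ∀ (y1 y0 : ℝ) (u : ι) (z : ℝ),
      prb p (fun ω => Y1 ω = y1 ∧ Y0 ω = y0 ∧ U ω = u ∧ Z ω = z) =
        prb p (fun ω => Y1 ω = y1 ∧ Y0 ω = y0 ∧ U ω = u) * prb p (fun ω => Z ω = z))
    (hcind : ∀ (y1 y0 d z : ℝ) (u : ι),
      cpr p (fun ω => Y1 ω = y1 ∧ Y0 ω = y0 ∧ D ω = d) (fun ω => Z ω = z ∧ U ω = u) =
        cpr p (fun ω => Y1 ω = y1 ∧ Y0 ω = y0) (fun ω => Z ω = z ∧ U ω = u) *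
          cpr p (fun ω => D ω = d) (fun ω => Z ω = z ∧ U ω = u))
    (w : ι → ℝ)
    (hw : ∀ u, w u = cpr p (fun ω => D ω = 1) (fun ω => Z ω = 1 ∧ U ω = u) -
                    cpr p (fun ω => D ω = 1) (fun ω => Z ω = 0 ∧ U ω = u))
    (hZ1 : 0 < prb p (fun ω => Z ω = 1)) (hZ0 : 0 < prb p (fun ω => Z ω = 0))
    (τ : ι → ℝ)
    (hτ : ∀ u, τ u = cex p (fun ω => Y1 ω - Y0 ω) (fun ω => U ω = u))
    (hEw : exv p (fun ω => w (U ω)) ≠ 0) :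
    (cex p Y (fun ω => Z ω = 1) - cex p Y (fun ω => Z ω = 0)) /
        (cpr p (fun ω => D ω = 1) (fun ω => Z ω = 1) -
          cpr p (fun ω => D ω = 1) (fun ω => Z ω = 0)) =
      exv p (fun ω => τ (U ω) * w (U ω)) / exv p (fun ω => w (U ω)) := by
  classical
  -- positivity facts
  have hU : ∀ u, 0 < prb p (fun ω => U ω = u) := fun u =>
    lt_of_lt_of_le (hpos 1 u (Or.inr rfl)) (prb_mono p hp fun ω h => h.2)
  -- key B : independence of (Y1,Y0,U) from Z, expectation form
  have keyB : ∀ (φ : ℝ × ℝ → ℝ) (u : ι) (z : ℝ),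
      ev p (fun ω => U ω = u ∧ Z ω = z) (fun ω => φ (Y1 ω, Y0 ω)) =
        ev p (fun ω => U ω = u) (fun ω => φ (Y1 ω, Y0 ω)) * prb p (fun ω => Z ω = z) := by
    intro φ u z
    rw [ev_image, ev_image, Finset.sum_mul]
    refine Finset.sum_congr rfl fun c _ => ?_
    rw [mul_assoc]
    congr 1
    have h1 : prb p (fun ω => (Y1 ω, Y0 ω) = c ∧ (U ω = u ∧ Z ω = z)) =
        prb p (fun ω => Y1 ω = c.1 ∧ Y0 ω = c.2 ∧ U ω = u ∧ Z ω = z) :=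
      prb_congr p fun ω => by rw [Prod.ext_iff]; tauto
    have h2 : prb p (fun ω => (Y1 ω, Y0 ω) = c ∧ U ω = u) =
        prb p (fun ω => Y1 ω = c.1 ∧ Y0 ω = c.2 ∧ U ω = u) :=
      prb_congr p fun ω => by rw [Prod.ext_iff]; tauto
    rw [h1, h2, hindep]
  -- key C : conditional independence, expectation form
  have keyC : ∀ (φ : ℝ × ℝ → ℝ) (u : ι) (z : ℝ), (z = 0 ∨ z = 1) →
      ev p (fun ω => (Z ω = z ∧ U ω = u) ∧ D ω = 1) (fun ω => φ (Y1 ω, Y0 ω)) *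
        prb p (fun ω => Z ω = z ∧ U ω = u) =
      ev p (fun ω => Z ω = z ∧ U ω = u) (fun ω => φ (Y1 ω, Y0 ω)) *
        prb p (fun ω => D ω = 1 ∧ (Z ω = z ∧ U ω = u)) := by
    intro φ u z hz
    have hq : prb p (fun ω => Z ω = z ∧ U ω = u) ≠ 0 := (hpos z u hz).ne'
    rw [ev_image, ev_image, Finset.sum_mul, Finset.sum_mul]
    refine Finset.sum_congr rfl fun c _ => ?_
    have h := hcind c.1 c.2 1 z u
    unfold cpr at h
    have h1 : prb p (fun ω => (Y1 ω, Y0 ω) = c ∧ ((Z ω = z ∧ U ω = u) ∧ D ω = 1)) =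
        prb p (fun ω => (Y1 ω = c.1 ∧ Y0 ω = c.2 ∧ D ω = 1) ∧ (Z ω = z ∧ U ω = u)) :=
      prb_congr p fun ω => by rw [Prod.ext_iff]; tauto
    have h2 : prb p (fun ω => (Y1 ω, Y0 ω) = c ∧ (Z ω = z ∧ U ω = u)) =
        prb p (fun ω => (Y1 ω = c.1 ∧ Y0 ω = c.2) ∧ (Z ω = z ∧ U ω = u)) :=
      prb_congr p fun ω => by rw [Prod.ext_iff]
    rw [h1, h2]
    set q := prb p (fun ω => Z ω = z ∧ U ω = u) with hqdef
    have key : prb p (fun ω => (Y1 ω = c.1 ∧ Y0 ω = c.2 ∧ D ω = 1) ∧ (Z ω = z ∧ U ω = u)) * q =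
        prb p (fun ω => (Y1 ω = c.1 ∧ Y0 ω = c.2) ∧ (Z ω = z ∧ U ω = u)) *
          prb p (fun ω => D ω = 1 ∧ (Z ω = z ∧ U ω = u)) := by
      rw [div_mul_div_comm, div_eq_div_iff hq (mul_ne_zero hq hq)] at h
      apply mul_right_cancel₀ hq
      linear_combination h
    linear_combination φ c * key
  -- claim A : U ⟂ Z
  have claimA : ∀ (u : ι) (z : ℝ), prb p (fun ω => Z ω = z ∧ U ω = u) =
      prb p (fun ω => U ω = u) * prb p (fun ω => Z ω = z) := by
    intro u z
    have h : ev p (fun ω => U ω = u ∧ Z ω = z) (fun _ => (1:ℝ)) =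
        ev p (fun ω => U ω = u) (fun _ => (1:ℝ)) * prb p (fun ω => Z ω = z) :=
      keyB (fun _ => 1) u z
    rw [prb_congr p (fun ω => (and_comm : (Z ω = z ∧ U ω = u) ↔ _)), prb_eq_ev, h, ← prb_eq_ev]
  -- partition of probabilities over U
  have prb_part : ∀ A : Ω → Prop, prb p A = ∑ u : ι, prb p (fun ω => A ω ∧ U ω = u) := by
    intro A
    rw [prb_eq_ev, ev_partition p A _ U]
    exact Finset.sum_congr rfl fun u _ => (prb_eq_ev p _).symm
  -- main per-z computation of E[Y | Z = z]
  have main : ∀ z : ℝ, z = 0 ∨ z = 1 → 0 < prb p (fun ω => Z ω = z) →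
      cex p Y (fun ω => Z ω = z) =
        (∑ u, ev p (fun ω => U ω = u) Y0) +
        ∑ u, ev p (fun ω => U ω = u) (fun ω => Y1 ω - Y0 ω) *
          cpr p (fun ω => D ω = 1) (fun ω => Z ω = z ∧ U ω = u) := by
    intro z hz hZz
    have hcex : cex p Y (fun ω => Z ω = z) =
        ev p (fun ω => Z ω = z) Y / prb p (fun ω => Z ω = z) := rfl
    rw [hcex, div_eq_iff hZz.ne']
    have step1 : ev p (fun ω => Z ω = z) Y =
        ev p (fun ω => Z ω = z) Y0 +
        ev p (fun ω => Z ω = z ∧ D ω = 1) (fun ω => Y1 ω - Y0 ω) := by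
      unfold ev
      rw [← Finset.sum_add_distrib]
      refine Finset.sum_congr rfl fun ω _ => ?_
      by_cases hA : Z ω = z
      · rcases hDbin ω with hd | hd
        · have hnd : ¬(Z ω = z ∧ D ω = 1) := by simp [hd]
          rw [if_pos hA, if_pos hA, if_neg hnd, hYobs ω, hd]; ring
        · have hyd : (Z ω = z ∧ D ω = 1) := ⟨hA, hd⟩
          rw [if_pos hA, if_pos hA, if_pos hyd, hYobs ω, hd]; ring
      · rw [if_neg hA, if_neg hA, if_neg (fun h => hA h.1)]; ring
    rw [step1, ev_partition p (fun ω => Z ω = z) Y0 U,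
      ev_partition p (fun ω => Z ω = z ∧ D ω = 1) (fun ω => Y1 ω - Y0 ω) U,
      add_mul, Finset.sum_mul, Finset.sum_mul]
    congr 1
    · refine Finset.sum_congr rfl fun u _ => ?_
      have e1 : ev p (fun ω => Z ω = z ∧ U ω = u) Y0 =
          ev p (fun ω => U ω = u ∧ Z ω = z) Y0 :=
        ev_congr p _ fun ω => and_comm
      have e2 : ev p (fun ω => U ω = u ∧ Z ω = z) Y0 =
          ev p (fun ω => U ω = u) Y0 * prb p (fun ω => Z ω = z) :=
        keyB (fun c => c.2) u z
      rw [e1, e2]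
    · refine Finset.sum_congr rfl fun u _ => ?_
      have hq : prb p (fun ω => Z ω = z ∧ U ω = u) ≠ 0 := (hpos z u hz).ne'
      have e1 : ev p (fun ω => (Z ω = z ∧ D ω = 1) ∧ U ω = u) (fun ω => Y1 ω - Y0 ω) =
          ev p (fun ω => (Z ω = z ∧ U ω = u) ∧ D ω = 1) (fun ω => Y1 ω - Y0 ω) :=
        ev_congr p _ fun ω => by tauto
      have e2 : ev p (fun ω => (Z ω = z ∧ U ω = u) ∧ D ω = 1) (fun ω => Y1 ω - Y0 ω) *
            prb p (fun ω => Z ω = z ∧ U ω = u) =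
          ev p (fun ω => Z ω = z ∧ U ω = u) (fun ω => Y1 ω - Y0 ω) *
            prb p (fun ω => D ω = 1 ∧ (Z ω = z ∧ U ω = u)) :=
        keyC (fun c => c.1 - c.2) u z hz
      have e3 : ev p (fun ω => Z ω = z ∧ U ω = u) (fun ω => Y1 ω - Y0 ω) =
          ev p (fun ω => U ω = u) (fun ω => Y1 ω - Y0 ω) * prb p (fun ω => Z ω = z) := by
        have e3a : ev p (fun ω => Z ω = z ∧ U ω = u) (fun ω => Y1 ω - Y0 ω) =
            ev p (fun ω => U ω = u ∧ Z ω = z) (fun ω => Y1 ω - Y0 ω) :=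
          ev_congr p _ fun ω => and_comm
        have e3b : ev p (fun ω => U ω = u ∧ Z ω = z) (fun ω => Y1 ω - Y0 ω) =
            ev p (fun ω => U ω = u) (fun ω => Y1 ω - Y0 ω) * prb p (fun ω => Z ω = z) :=
          keyB (fun c => c.1 - c.2) u z
        rw [e3a, e3b]
      have hcpr : cpr p (fun ω => D ω = 1) (fun ω => Z ω = z ∧ U ω = u) =
          prb p (fun ω => D ω = 1 ∧ (Z ω = z ∧ U ω = u)) /
            prb p (fun ω => Z ω = z ∧ U ω = u) := rfl
      rw [e1, hcpr]
      rw [e3] at e2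
      field_simp
      linear_combination e2
  -- numerator
  have hnum : cex p Y (fun ω => Z ω = 1) - cex p Y (fun ω => Z ω = 0) =
      ∑ u, ev p (fun ω => U ω = u) (fun ω => Y1 ω - Y0 ω) * w u := by
    rw [main 1 (Or.inr rfl) hZ1, main 0 (Or.inl rfl) hZ0]
    have h : (∑ u, ev p (fun ω => U ω = u) (fun ω => Y1 ω - Y0 ω) *
          cpr p (fun ω => D ω = 1) (fun ω => Z ω = 1 ∧ U ω = u)) -
        (∑ u, ev p (fun ω => U ω = u) (fun ω => Y1 ω - Y0 ω) *
          cpr p (fun ω => D ω = 1) (fun ω => Z ω = 0 ∧ U ω = u)) =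
        ∑ u, ev p (fun ω => U ω = u) (fun ω => Y1 ω - Y0 ω) * w u := by
      rw [← Finset.sum_sub_distrib]
      exact Finset.sum_congr rfl fun u _ => by rw [hw u]; ring
    linarith [h]
  -- denominator per z
  have hden : ∀ z : ℝ, z = 0 ∨ z = 1 → 0 < prb p (fun ω => Z ω = z) →
      cpr p (fun ω => D ω = 1) (fun ω => Z ω = z) =
        ∑ u, cpr p (fun ω => D ω = 1) (fun ω => Z ω = z ∧ U ω = u) *
          prb p (fun ω => U ω = u) := by
    intro z hz hZz
    have hc : cpr p (fun ω => D ω = 1) (fun ω => Z ω = z) =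
        prb p (fun ω => D ω = 1 ∧ Z ω = z) / prb p (fun ω => Z ω = z) := rfl
    rw [hc, div_eq_iff hZz.ne', prb_part (fun ω => D ω = 1 ∧ Z ω = z), Finset.sum_mul]
    refine Finset.sum_congr rfl fun u _ => ?_
    have hq : prb p (fun ω => Z ω = z ∧ U ω = u) ≠ 0 := (hpos z u hz).ne'
    have h1 : prb p (fun ω => (D ω = 1 ∧ Z ω = z) ∧ U ω = u) =
        prb p (fun ω => D ω = 1 ∧ (Z ω = z ∧ U ω = u)) :=
      prb_congr p fun ω => by tauto
    have hcpr : cpr p (fun ω => D ω = 1) (fun ω => Z ω = z ∧ U ω = u) =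
        prb p (fun ω => D ω = 1 ∧ (Z ω = z ∧ U ω = u)) /
          prb p (fun ω => Z ω = z ∧ U ω = u) := rfl
    rw [h1, hcpr, claimA u z, mul_assoc]
    exact (div_mul_cancel₀ _ (mul_ne_zero (hU u).ne' hZz.ne')).symm
  -- denominator
  have hdenom : cpr p (fun ω => D ω = 1) (fun ω => Z ω = 1) -
      cpr p (fun ω => D ω = 1) (fun ω => Z ω = 0) =
      ∑ u, w u * prb p (fun ω => U ω = u) := by
    rw [hden 1 (Or.inr rfl) hZ1, hden 0 (Or.inl rfl) hZ0, ← Finset.sum_sub_distrib]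
    exact Finset.sum_congr rfl fun u _ => by rw [hw u]; ring
  -- link τ with ev
  have hτβ : ∀ u, τ u * prb p (fun ω => U ω = u) =
      ev p (fun ω => U ω = u) (fun ω => Y1 ω - Y0 ω) := by
    intro u
    have hc : cex p (fun ω => Y1 ω - Y0 ω) (fun ω => U ω = u) =
        ev p (fun ω => U ω = u) (fun ω => Y1 ω - Y0 ω) / prb p (fun ω => U ω = u) := rfl
    rw [hτ u, hc, div_mul_cancel₀ _ (hU u).ne']
  -- expectations over U
  have hEw' : exv p (fun ω => w (U ω)) = ∑ u, w u * prb p (fun ω => U ω = u) :=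
    exv_comp p U w
  have hEτw : exv p (fun ω => τ (U ω) * w (U ω)) =
      ∑ u, (τ u * w u) * prb p (fun ω => U ω = u) :=
    exv_comp p U (fun u => τ u * w u)
  rw [hnum, hdenom, hEw', hEτw]
  congr 1
  refine Finset.sum_congr rfl fun u _ => ?_
  rw [← hτβ u]
  ring
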